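/- Let X and Y be Hilbert spaces and A : X → Y' a bounded linear operator that is injective with dense range, such that the adjoint A* : Y → X' is also injective with dense range, and suppose the norm on Y satisfies ‖v‖_Y = ‖A*v‖_{X'} for all v ∈ Y. Then A is an isometric isomorphism from X onto Y', i.e. ‖Au‖_{Y'} = ‖u‖_X for all u ∈ X and A is surjective. -/

import Mathlib

/-!
Duality alone gives the isometry. For the upper bound, `|A u v| = |A* v u| ≤ ‖A* v‖ ‖u‖ = ‖v‖ ‖u‖`.
For the lower bound, `|A* v u| = |A u v| ≤ ‖A u‖ ‖v‖ = ‖A u‖ ‖A* v‖`, so the closed condition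
`|f u| ≤ ‖A u‖ ‖f‖` holds on the dense range of `A*`, hence for every `f ∈ X'`, and Hahn–Banach
turns this into `‖u‖ ≤ ‖A u‖`. An isometry out of a complete space has closed range, so the dense
range of `A` is all of `Y'`.
-/

theorem Isometry.surjective_of_denseRange {E F : Type*} [MetricSpace E] [CompleteSpace E]
    [MetricSpace F] {f : E → F} (hf : Isometry f) (hdense : DenseRange f) :
    Function.Surjective f := by
  rw [← Set.range_eq_univ, ← hdense.closure_range, hf.isClosedEmbedding.isClosed_range.closure_eq]

section Transpose

variable {𝕜 X Y : Type*} [RCLike 𝕜] [NormedAddCommGroup X] [NormedSpace 𝕜 X]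
  [NormedAddCommGroup Y] [NormedSpace 𝕜 Y]
  {A : X →L[𝕜] Y →L[𝕜] 𝕜} {Astar : Y →L[𝕜] X →L[𝕜] 𝕜}

theorem norm_apply_le_of_norm_transpose_le (hAstar : ∀ v u, Astar v u = A u v)
    (hnorm : ∀ v, ‖Astar v‖ ≤ ‖v‖) (u : X) : ‖A u‖ ≤ ‖u‖ := by
  refine (A u).opNorm_le_bound (norm_nonneg u) fun v => ?_
  calc ‖A u v‖ = ‖Astar v u‖ := by rw [hAstar]
    _ ≤ ‖Astar v‖ * ‖u‖ := (Astar v).le_opNorm u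
    _ ≤ ‖v‖ * ‖u‖ := by gcongr; exact hnorm v
    _ = ‖u‖ * ‖v‖ := mul_comm _ _

theorem norm_le_norm_apply_of_le_norm_transpose (hAstar : ∀ v u, Astar v u = A u v)
    (hnorm : ∀ v, ‖v‖ ≤ ‖Astar v‖) (hdense : DenseRange Astar) (u : X) : ‖u‖ ≤ ‖A u‖ := by
  refine NormedSpace.norm_le_dual_bound 𝕜 u (norm_nonneg _) fun f => ?_
  refine hdense.induction_on f (isClosed_le (by fun_prop) (by fun_prop)) fun v => ?_
  calc ‖Astar v u‖ = ‖A u v‖ := by rw [hAstar]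
    _ ≤ ‖A u‖ * ‖v‖ := (A u).le_opNorm v
    _ ≤ ‖A u‖ * ‖Astar v‖ := by gcongr; exact hnorm v

end Transpose

theorem stmt0_general
    {X Y : Type*} [NormedAddCommGroup X] [InnerProductSpace ℝ X] [CompleteSpace X]
    [NormedAddCommGroup Y] [InnerProductSpace ℝ Y]
    (A : X →L[ℝ] (Y →L[ℝ] ℝ)) (Astar : Y →L[ℝ] (X →L[ℝ] ℝ))
    (hAstar : ∀ (v : Y) (u : X), Astar v u = A u v)
    (hAdense : DenseRange A)
    (hASdense : DenseRange Astar)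
    (hnorm : ∀ v : Y, ‖v‖ = ‖Astar v‖) :
    (∀ u : X, ‖A u‖ = ‖u‖) ∧ Function.Surjective A := by
  have hisom : ∀ u : X, ‖A u‖ = ‖u‖ := fun u =>
    le_antisymm (norm_apply_le_of_norm_transpose_le hAstar (fun v => (hnorm v).ge) u)
      (norm_le_norm_apply_of_le_norm_transpose hAstar (fun v => (hnorm v).le) hASdense u)
  exact ⟨hisom, (AddMonoidHomClass.isometry_of_norm A hisom).surjective_of_denseRange hAdense⟩

/-- If `A : X → Y'` and its adjoint `A* : Y → X'` are injective with dense
range, and the norm on `Y` is the optimal test norm `‖v‖_Y = ‖A*v‖_{X'}`, then `A` is an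
isometric isomorphism from `X` onto `Y'`. -/
theorem stmt0
    {X Y : Type*} [NormedAddCommGroup X] [InnerProductSpace ℝ X] [CompleteSpace X]
    [NormedAddCommGroup Y] [InnerProductSpace ℝ Y] [CompleteSpace Y]
    (A : X →L[ℝ] (Y →L[ℝ] ℝ)) (Astar : Y →L[ℝ] (X →L[ℝ] ℝ))
    (hAstar : ∀ (v : Y) (u : X), Astar v u = A u v)
    (hAinj : Function.Injective A) (hAdense : DenseRange A)
    (hASinj : Function.Injective Astar) (hASdense : DenseRange Astar)
    (hnorm : ∀ v : Y, ‖v‖ = ‖Astar v‖) :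
    (∀ u : X, ‖A u‖ = ‖u‖) ∧ Function.Surjective A :=
  stmt0_general A Astar hAstar hAdense hASdense hnorm
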